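/- arXiv:1804.04321 — 4 statements merged into one kernel-verified Lean document; each statement's English description precedes it below -/
import Mathlib

section
/- Let T be a bounded self-adjoint operator on a complex Hilbert space H, and let T₀ be the restriction of T to N(T)^⊥. Then σ_d(T₀) ⊆ σ_d(T) ⊆ σ_d(T₀) ∪ {0}, where σ_d denotes the discrete spectrum (isolated eigenvalues of finite multiplicity). -/
open ContinuousLinearMap MeasureTheory

variable {E F : Type*} [NormedAddCommGroup E] [InnerProductSpace ℂ E] [CompleteSpace E]
  [NormedAddCommGroup F] [InnerProductSpace ℂ F] [CompleteSpace F]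

/-- The point spectrum (set of eigenvalues). -/
def pointSpec (T : E →L[ℂ] E) : Set ℂ := {l | ∃ x : E, x ≠ 0 ∧ T x = l • x}

/-- The essential spectrum of a (self-adjoint) bounded operator: eigenvalues of infinite
multiplicity, limit points of the point spectrum, and the continuous spectrum. -/
def essSpec (T : E →L[ℂ] E) : Set ℂ :=
  {l | (¬ FiniteDimensional ℂ (LinearMap.ker ((T - l • (1 : E →L[ℂ] E) : E →L[ℂ] E) : E →ₗ[ℂ] E))) ∨
       l ∈ closure (pointSpec T \ {l}) ∨
       (l ∈ spectrum ℂ T ∧ Function.Injective ⇑(T - l • (1 : E →L[ℂ] E)) ∧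
         Dense (Set.range ⇑(T - l • (1 : E →L[ℂ] E))))}

/-- The discrete spectrum: isolated eigenvalues of finite multiplicity. -/
def discSpec (T : E →L[ℂ] E) : Set ℂ :=
  {l | l ∈ pointSpec T ∧ FiniteDimensional ℂ (LinearMap.ker ((T - l • (1 : E →L[ℂ] E) : E →L[ℂ] E) : E →ₗ[ℂ] E)) ∧
       l ∉ closure (spectrum ℂ T \ {l})}

/-- The minimum modulus m(T) = inf {‖Tx‖ : ‖x‖ = 1}. -/
noncomputable def minMod (T : E →L[ℂ] F) : ℝ := sInf ((fun x => ‖T x‖) '' {x : E | ‖x‖ = 1})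

/-- T attains its minimum modulus. -/
def MinAttain (T : E →L[ℂ] F) : Prop := ∃ x : E, ‖x‖ = 1 ∧ ‖T x‖ = minMod T

/-- T attains its norm. -/
def NormAttain (T : E →L[ℂ] F) : Prop := ∃ x : E, ‖x‖ = 1 ∧ ‖T x‖ = ‖T‖

/-- T is absolutely minimum attaining (AM). -/
def AbsMinAttain (T : E →L[ℂ] F) : Prop :=
  ∀ M : Submodule ℂ E, IsClosed (M : Set E) → MinAttain (T.comp M.subtypeL)

/-- T is absolutely norm attaining (AN). -/
def AbsNormAttain (T : E →L[ℂ] F) : Prop :=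
  ∀ M : Submodule ℂ E, IsClosed (M : Set E) → NormAttain (T.comp M.subtypeL)

/-- S is the Moore-Penrose (generalized) inverse of T. -/
def MoorePenrose (T S : E →L[ℂ] E) : Prop :=
  T ∘L S ∘L T = T ∧ S ∘L T ∘L S = S ∧ IsSelfAdjoint (T ∘L S) ∧ IsSelfAdjoint (S ∘L T)

/-- T is paranormal: ‖Tx‖² ≤ ‖T²x‖‖x‖ for all x. -/
def Paranormal (T : E →L[ℂ] E) : Prop := ∀ x : E, ‖T x‖ ^ 2 ≤ ‖T (T x)‖ * ‖x‖

variable {H : Type*} [NormedAddCommGroup H] [InnerProductSpace ℂ H] [CompleteSpace H]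

/-!
With respect to `H = (ker T)ᗮ ⊕ ker T` the operator `T` is block diagonal, `T = T₀ ⊕ 0`, and the
range of `T` lies in `(ker T)ᗮ`. Consequently `σ(T₀) ⊆ σ(T) ⊆ σ(T₀) ∪ {0}`, and for `μ ≠ 0` every
`μ`-eigenvector of `T` is `μ⁻¹ T x ∈ (ker T)ᗮ`, so `T` and `T₀` have the same `μ`-eigenspace.
Isolation of `μ ≠ 0` in the spectrum does not see the extra point `0`, and `0` is never an
eigenvalue of `T₀`.
-/

open Module End

section BlockDiagonal

variable {𝕜 M : Type*} [Field 𝕜] [AddCommGroup M] [Module 𝕜 M] {U V : Submodule 𝕜 M}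
  {f : End 𝕜 M} {f₀ : End 𝕜 U}

theorem algebraMap_end_sub_apply (μ : 𝕜) (g : End 𝕜 M) (x : M) :
    (algebraMap 𝕜 (End 𝕜 M) μ - g) x = μ • x - g x := rfl

theorem apply_mem_of_isCompl (hUV : IsCompl U V) (h₀ : ∀ x : U, (f₀ x : M) = f x)
    (hV : ∀ x ∈ V, f x = 0) (x : M) : f x ∈ U := by
  obtain ⟨p, q, hp, hq, rfl⟩ := Submodule.codisjoint_iff_exists_add_eq.mp hUV.codisjoint x
  rw [map_add, hV q hq, add_zero, ← h₀ ⟨p, hp⟩]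
  exact (f₀ _).2

theorem mem_of_apply_eq_smul_of_isCompl (hUV : IsCompl U V) (h₀ : ∀ x : U, (f₀ x : M) = f x)
    (hV : ∀ x ∈ V, f x = 0) {μ : 𝕜} (hμ : μ ≠ 0) {x : M} (hx : f x = μ • x) : x ∈ U := by
  rw [← inv_smul_smul₀ hμ x, ← hx]
  exact U.smul_mem _ (apply_mem_of_isCompl hUV h₀ hV x)

theorem spectrum_subset_of_isCompl (hUV : IsCompl U V) (h₀ : ∀ x : U, (f₀ x : M) = f x)
    (hV : ∀ x ∈ V, f x = 0) : spectrum 𝕜 f₀ ⊆ spectrum 𝕜 f := by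
  intro μ hμ
  contrapose hμ
  rw [spectrum.notMem_iff, isUnit_iff] at hμ ⊢
  refine ⟨fun x y hxy ↦ Subtype.ext (hμ.1 ?_), fun v ↦ ?_⟩
  · simpa [algebraMap_end_sub_apply, h₀] using congrArg Subtype.val hxy
  obtain ⟨x, hx⟩ := hμ.2 v
  obtain ⟨p, q, hp, hq, rfl⟩ := Submodule.codisjoint_iff_exists_add_eq.mp hUV.codisjoint x
  rw [algebraMap_end_sub_apply] at hx
  -- `μ • q` lies in `U ⊓ V`, so it vanishes, and then `q` is in the kernel of `μ - f`.
  have hμq : μ • q = 0 := by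
    refine Submodule.disjoint_def.mp hUV.disjoint _ ?_ (V.smul_mem μ hq)
    have : μ • q = v + f (p + q) - μ • p := by rw [← hx]; module
    rw [this]
    exact U.sub_mem (U.add_mem v.2 (apply_mem_of_isCompl hUV h₀ hV _)) (U.smul_mem μ hp)
  have hq0 : q = 0 := hμ.1 (by simp [hμq, hV q hq])
  refine ⟨⟨p, hp⟩, Subtype.ext ?_⟩
  simpa [algebraMap_end_sub_apply, h₀, hq0] using hx

theorem spectrum_subset_insert_zero_of_isCompl (hUV : IsCompl U V)
    (h₀ : ∀ x : U, (f₀ x : M) = f x) (hV : ∀ x ∈ V, f x = 0) :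
    spectrum 𝕜 f ⊆ insert 0 (spectrum 𝕜 f₀) := by
  intro μ hμ
  by_contra hμ'
  obtain ⟨hμ0, hμ₀⟩ := not_or.mp hμ'
  rw [spectrum.notMem_iff, isUnit_iff] at hμ₀
  refine spectrum.mem_iff.mp hμ ((isUnit_iff _).mpr ⟨?_, fun v ↦ ?_⟩)
  · refine (injective_iff_map_eq_zero _).mpr fun x hx ↦ ?_
    rw [algebraMap_end_sub_apply, sub_eq_zero, eq_comm] at hx
    have hxU := mem_of_apply_eq_smul_of_isCompl hUV h₀ hV hμ0 hx
    have : (⟨x, hxU⟩ : U) = 0 :=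
      (injective_iff_map_eq_zero _).mp hμ₀.1 _ <| Subtype.ext <| by simp [h₀, hx]
    simpa using congrArg Subtype.val this
  · obtain ⟨a, b, ha, hb, rfl⟩ := Submodule.codisjoint_iff_exists_add_eq.mp hUV.codisjoint v
    obtain ⟨p, hp⟩ := hμ₀.2 ⟨a, ha⟩
    have hpa : μ • (p : M) - f p = a := by
      simpa [algebraMap_end_sub_apply, h₀] using congrArg Subtype.val hp
    refine ⟨p + μ⁻¹ • b, ?_⟩
    rw [algebraMap_end_sub_apply, map_add, map_smul, hV b hb, smul_zero, add_zero, smul_add,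
      smul_inv_smul₀ hμ0, ← hpa]
    abel

theorem eigenspace_eq_map_subtype_of_isCompl (hUV : IsCompl U V)
    (h₀ : ∀ x : U, (f₀ x : M) = f x) (hV : ∀ x ∈ V, f x = 0) {μ : 𝕜} (hμ : μ ≠ 0) :
    f.eigenspace μ = (f₀.eigenspace μ).map U.subtype := by
  ext x
  simp only [Submodule.mem_map, mem_eigenspace_iff, Submodule.subtype_apply]
  constructor
  · intro hx
    exact ⟨⟨x, mem_of_apply_eq_smul_of_isCompl hUV h₀ hV hμ hx⟩, Subtype.ext (by simp [h₀, hx]),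
      rfl⟩
  · rintro ⟨y, hy, rfl⟩
    simpa [h₀] using congrArg Subtype.val hy

theorem hasEigenvalue_iff_of_isCompl (hUV : IsCompl U V)
    (h₀ : ∀ x : U, (f₀ x : M) = f x) (hV : ∀ x ∈ V, f x = 0) {μ : 𝕜} (hμ : μ ≠ 0) :
    f.HasEigenvalue μ ↔ f₀.HasEigenvalue μ := by
  rw [hasEigenvalue_iff, hasEigenvalue_iff, eigenspace_eq_map_subtype_of_isCompl hUV h₀ hV hμ,
    ← Submodule.map_bot U.subtype, (Submodule.map_injective_of_injective U.injective_subtype).ne_iff]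

theorem finiteDimensional_eigenspace_iff_of_isCompl (hUV : IsCompl U V)
    (h₀ : ∀ x : U, (f₀ x : M) = f x) (hV : ∀ x ∈ V, f x = 0) {μ : 𝕜} (hμ : μ ≠ 0) :
    FiniteDimensional 𝕜 (f.eigenspace μ) ↔ FiniteDimensional 𝕜 (f₀.eigenspace μ) := by
  rw [eigenspace_eq_map_subtype_of_isCompl hUV h₀ hV hμ]
  exact (Module.Finite.equiv_iff (Submodule.equivMapOfInjective _ U.injective_subtype _)).symm

theorem not_hasEigenvalue_zero_of_isCompl (hUV : IsCompl U V)
    (h₀ : ∀ x : U, (f₀ x : M) = f x) (hker : LinearMap.ker f ≤ V) : ¬ f₀.HasEigenvalue 0 := by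
  rw [hasEigenvalue_iff, not_not, Submodule.eq_bot_iff]
  intro x hx
  rw [mem_eigenspace_iff, zero_smul] at hx
  have hfx : f x = 0 := by rw [← h₀, hx, Submodule.coe_zero]
  exact Subtype.ext (Submodule.disjoint_def.mp hUV.disjoint _ x.2 (hker hfx))

end BlockDiagonal

theorem mem_closure_diff_singleton_iff_of_subset_insert {X : Type*} [TopologicalSpace X]
    [T1Space X] {A B : Set X} {a x : X} (hAB : A ⊆ B) (hBA : B ⊆ insert a A) (hx : x ≠ a) :
    x ∈ closure (A \ {x}) ↔ x ∈ closure (B \ {x}) := by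
  refine ⟨fun h ↦ closure_mono (Set.sdiff_subset_sdiff_left hAB) h, fun h ↦ ?_⟩
  have hB : B \ {x} ⊆ {a} ∪ A \ {x} := by
    rw [Set.singleton_union]
    exact fun y hy ↦ (hBA hy.1).imp_right fun hyA ↦ ⟨hyA, hy.2⟩
  have := closure_mono hB h
  rw [closure_union, closure_singleton] at this
  exact this.resolve_left hx

theorem ker_sub_smul_one_eq_eigenspace {𝕜 X : Type*} [NontriviallyNormedField 𝕜]
    [NormedAddCommGroup X] [NormedSpace 𝕜 X] (T : X →L[𝕜] X) (l : 𝕜) :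
    LinearMap.ker ((T - l • (1 : X →L[𝕜] X) : X →L[𝕜] X) : X →ₗ[𝕜] X) =
      eigenspace (T : End 𝕜 X) l := by
  ext x
  simp [sub_eq_zero]

theorem mem_pointSpec_iff_hasEigenvalue {X : Type*} [NormedAddCommGroup X]
    [InnerProductSpace ℂ X] (T : X →L[ℂ] X) (l : ℂ) :
    l ∈ pointSpec T ↔ HasEigenvalue (T : End ℂ X) l := by
  rw [hasEigenvalue_iff, Submodule.ne_bot_iff]
  simp [pointSpec, and_comm]

theorem mem_discSpec_iff (T : E →L[ℂ] E) (l : ℂ) :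
    l ∈ discSpec T ↔ HasEigenvalue (T : End ℂ E) l ∧
      FiniteDimensional ℂ (eigenspace (T : End ℂ E) l) ∧
      l ∉ closure (spectrum ℂ (T : End ℂ E) \ {l}) := by
  rw [discSpec, Set.mem_ofPred_eq, mem_pointSpec_iff_hasEigenvalue,
    ker_sub_smul_one_eq_eigenspace, ContinuousLinearMap.spectrum_eq]

theorem mem_discSpec_iff_of_isCompl {U V : Submodule ℂ H} [CompleteSpace U] (hUV : IsCompl U V)
    {T : H →L[ℂ] H} {T₀ : U →L[ℂ] U} (h₀ : ∀ x : U, (T₀ x : H) = T x)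
    (hV : ∀ x ∈ V, T x = 0) {l : ℂ} (hl : l ≠ 0) : l ∈ discSpec T₀ ↔ l ∈ discSpec T := by
  have h₀' : ∀ x : U, ((T₀ : End ℂ U) x : H) = (T : End ℂ H) x := h₀
  rw [mem_discSpec_iff, mem_discSpec_iff, hasEigenvalue_iff_of_isCompl hUV h₀' hV hl,
    finiteDimensional_eigenspace_iff_of_isCompl hUV h₀' hV hl,
    mem_closure_diff_singleton_iff_of_subset_insert (spectrum_subset_of_isCompl hUV h₀' hV)
      (spectrum_subset_insert_zero_of_isCompl hUV h₀' hV) hl]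

theorem stmt2_general (T : H →L[ℂ] H)
    (T₀ : (LinearMap.ker (T : H →ₗ[ℂ] H))ᗮ →L[ℂ] (LinearMap.ker (T : H →ₗ[ℂ] H))ᗮ)
    (h₀ : ∀ x : (LinearMap.ker (T : H →ₗ[ℂ] H))ᗮ, (T₀ x : H) = T x) :
    discSpec T₀ ⊆ discSpec T ∧ discSpec T ⊆ discSpec T₀ ∪ {0} := by
  have : CompleteSpace (LinearMap.ker (T : H →ₗ[ℂ] H)) := T.isClosed_ker.completeSpace_coe
  have hUV := (LinearMap.ker (T : H →ₗ[ℂ] H)).isCompl_orthogonal.symm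
  have hiff : ∀ l ≠ 0, l ∈ discSpec T₀ ↔ l ∈ discSpec T := fun l hl ↦
    mem_discSpec_iff_of_isCompl hUV h₀ (fun x hx ↦ hx) hl
  have h0 : (0 : ℂ) ∉ discSpec T₀ := fun h ↦
    not_hasEigenvalue_zero_of_isCompl hUV (f := (T : End ℂ H)) h₀ le_rfl
      ((mem_discSpec_iff T₀ 0).mp h).1
  refine ⟨fun l hl ↦ (hiff l (ne_of_mem_of_not_mem hl h0)).mp hl, fun l hl ↦ ?_⟩
  rcases eq_or_ne l 0 with rfl | hl0
  exacts [Or.inr rfl, Or.inl ((hiff l hl0).mpr hl)]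

theorem stmt2 (T : H →L[ℂ] H) (hT : IsSelfAdjoint T)
    (T₀ : (LinearMap.ker (T : H →ₗ[ℂ] H))ᗮ →L[ℂ] (LinearMap.ker (T : H →ₗ[ℂ] H))ᗮ)
    (h₀ : ∀ x : (LinearMap.ker (T : H →ₗ[ℂ] H))ᗮ, (T₀ x : H) = T x) :
    discSpec T₀ ⊆ discSpec T ∧ discSpec T ⊆ discSpec T₀ ∪ {0} :=
  stmt2_general T T₀ h₀
end

section
/- Let T be a bounded operator on a complex Hilbert space H with N(T) = N(T*). Then σ(T*T) = σ(TT*), σ_ess(T*T) = σ_ess(TT*), and σ_d(T*T) = σ_d(TT*). -/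
open ContinuousLinearMap MeasureTheory

variable {E F : Type*} [NormedAddCommGroup E] [InnerProductSpace ℂ E] [CompleteSpace E]
  [NormedAddCommGroup F] [InnerProductSpace ℂ F] [CompleteSpace F]

variable {H : Type*} [NormedAddCommGroup H] [InnerProductSpace ℂ H] [CompleteSpace H]

/-!
For `l ≠ 0`, `T` maps `ker (T*T - l)` isomorphically onto `ker (TT* - l)`, with inverse
`l⁻¹ T*`, and `σ(T*T) \ {0} = σ(TT*) \ {0}` holds in any ring. At `l = 0` both kernels equal
`N(T) = N(T*)`; if `T*T` is invertible then `T` is injective and `T*` onto, and `N(T) = N(T*)`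
makes `T*` injective as well, so `T`, and with it `TT*`, is invertible. For a self-adjoint `S` and
real `l`, `S - l` has dense range iff it is injective, so the essential and discrete spectra of `S`
are determined by its spectrum together with the isomorphism types of the kernels `ker (S - l)`.
-/

section EigenspaceSwap

variable {𝕜 V W : Type*} [NontriviallyNormedField 𝕜] [NormedAddCommGroup V] [NormedSpace 𝕜 V]
  [NormedAddCommGroup W] [NormedSpace 𝕜 W]

lemma mem_ker_sub_smul_one_iff {S : V →L[𝕜] V} {l : 𝕜} {x : V} :
    x ∈ LinearMap.ker ((S - l • 1 : V →L[𝕜] V) : V →ₗ[𝕜] V) ↔ S x = l • x := by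
  simp [sub_eq_zero]

def kerSubSmulOneCompEquiv (A : V →L[𝕜] W) (B : W →L[𝕜] V) {l : 𝕜} (hl : l ≠ 0) :
    LinearMap.ker ((B ∘L A - l • 1 : V →L[𝕜] V) : V →ₗ[𝕜] V) ≃ₗ[𝕜]
      LinearMap.ker ((A ∘L B - l • 1 : W →L[𝕜] W) : W →ₗ[𝕜] W) where
  toFun x := ⟨A x, by
    have hx := mem_ker_sub_smul_one_iff.mp x.2
    rw [mem_ker_sub_smul_one_iff, comp_apply, ← comp_apply B, hx, map_smul]⟩
  invFun y := ⟨l⁻¹ • B y, by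
    have hy := mem_ker_sub_smul_one_iff.mp y.2
    rw [mem_ker_sub_smul_one_iff, comp_apply, map_smul, map_smul, ← comp_apply A, hy, map_smul,
      smul_comm]⟩
  map_add' x y := Subtype.ext (map_add A x.1 y.1)
  map_smul' c x := Subtype.ext (map_smul A c x.1)
  left_inv x := Subtype.ext <| by
    simp only [← comp_apply B, mem_ker_sub_smul_one_iff.mp x.2, smul_smul, inv_mul_cancel₀ hl,
      one_smul]
  right_inv y := Subtype.ext <| by
    simp only [map_smul, ← comp_apply A, mem_ker_sub_smul_one_iff.mp y.2, smul_smul,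
      inv_mul_cancel₀ hl, one_smul]

end EigenspaceSwap

lemma IsSelfAdjoint.dense_range_iff_injective {S : H →L[ℂ] H} (hS : IsSelfAdjoint S) :
    Dense (Set.range S) ↔ Function.Injective S := by
  rw [← coe_coe S, ← LinearMap.coe_range, Submodule.dense_iff_topologicalClosure_eq_top,
    Submodule.topologicalClosure_eq_top_iff, orthogonal_range, hS.adjoint_eq,
    LinearMap.ker_eq_bot]

lemma IsSelfAdjoint.sub_smul_one {S : H →L[ℂ] H} {l : ℂ} (hS : IsSelfAdjoint S)
    (hl : l ∈ spectrum ℂ S) :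
    IsSelfAdjoint (S - l • 1) := by
  rw [← Algebra.algebraMap_eq_smul_one]
  refine hS.sub (IsSelfAdjoint.algebraMap _ ?_)
  rw [hS.mem_spectrum_eq_re hl]
  exact Complex.conj_ofReal _

lemma IsSelfAdjoint.essSpec_eq {S : H →L[ℂ] H} (hS : IsSelfAdjoint S) :
    essSpec S =
      {l | (¬ FiniteDimensional ℂ (LinearMap.ker ((S - l • 1 : H →L[ℂ] H) : H →ₗ[ℂ] H))) ∨
        l ∈ closure (pointSpec S \ {l}) ∨
        (l ∈ spectrum ℂ S ∧ Function.Injective (S - l • 1 : H →L[ℂ] H))} := by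
  ext l
  refine or_congr_right (or_congr_right (and_congr_right fun hl => and_iff_left_of_imp ?_))
  exact ((hS.sub_smul_one hl).dense_range_iff_injective).mpr

section IsomorphicEigenspaces

variable {G : Type*} [NormedAddCommGroup G] [InnerProductSpace ℂ G]

lemma mem_pointSpec_iff_ne_bot {S : G →L[ℂ] G} {l : ℂ} :
    l ∈ pointSpec S ↔ LinearMap.ker ((S - l • 1 : G →L[ℂ] G) : G →ₗ[ℂ] G) ≠ ⊥ := by
  simp only [pointSpec, Set.mem_ofPred_eq, Submodule.ne_bot_iff, mem_ker_sub_smul_one_iff]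
  exact exists_congr fun _ => and_comm

def KerSubSmulOneIsomorphic (S₁ S₂ : G →L[ℂ] G) : Prop :=
  ∀ l : ℂ, Nonempty (LinearMap.ker ((S₁ - l • 1 : G →L[ℂ] G) : G →ₗ[ℂ] G) ≃ₗ[ℂ]
    LinearMap.ker ((S₂ - l • 1 : G →L[ℂ] G) : G →ₗ[ℂ] G))

namespace KerSubSmulOneIsomorphic

variable {S₁ S₂ : G →L[ℂ] G} (he : KerSubSmulOneIsomorphic S₁ S₂)
include he

lemma finiteDimensional_ker_iff (l : ℂ) :
    FiniteDimensional ℂ (LinearMap.ker ((S₁ - l • 1 : G →L[ℂ] G) : G →ₗ[ℂ] G)) ↔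
      FiniteDimensional ℂ (LinearMap.ker ((S₂ - l • 1 : G →L[ℂ] G) : G →ₗ[ℂ] G)) :=
  let ⟨e⟩ := he l
  ⟨fun _ => e.finiteDimensional, fun _ => e.symm.finiteDimensional⟩

lemma ker_eq_bot_iff (l : ℂ) :
    LinearMap.ker ((S₁ - l • 1 : G →L[ℂ] G) : G →ₗ[ℂ] G) = ⊥ ↔
      LinearMap.ker ((S₂ - l • 1 : G →L[ℂ] G) : G →ₗ[ℂ] G) = ⊥ := by
  obtain ⟨e⟩ := he l
  rw [← Submodule.subsingleton_iff_eq_bot, ← Submodule.subsingleton_iff_eq_bot]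
  exact ⟨fun _ => e.symm.toEquiv.subsingleton, fun _ => e.toEquiv.subsingleton⟩

lemma injective_iff (l : ℂ) :
    Function.Injective (S₁ - l • 1 : G →L[ℂ] G) ↔
      Function.Injective (S₂ - l • 1 : G →L[ℂ] G) := by
  rw [← coe_coe (S₁ - _), ← coe_coe (S₂ - _), ← LinearMap.ker_eq_bot, ← LinearMap.ker_eq_bot,
    he.ker_eq_bot_iff]

lemma pointSpec_eq : pointSpec S₁ = pointSpec S₂ := by
  ext l
  rw [mem_pointSpec_iff_ne_bot, mem_pointSpec_iff_ne_bot, ne_eq, ne_eq, he.ker_eq_bot_iff]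

lemma discSpec_eq (hσ : spectrum ℂ S₁ = spectrum ℂ S₂) : discSpec S₁ = discSpec S₂ := by
  ext l
  simp only [discSpec, Set.mem_ofPred_eq, he.pointSpec_eq, hσ, he.finiteDimensional_ker_iff]

end KerSubSmulOneIsomorphic

lemma KerSubSmulOneIsomorphic.essSpec_eq {S₁ S₂ : H →L[ℂ] H}
    (he : KerSubSmulOneIsomorphic S₁ S₂) (h₁ : IsSelfAdjoint S₁) (h₂ : IsSelfAdjoint S₂) (hσ : spectrum ℂ S₁ = spectrum ℂ S₂) :
    essSpec S₁ = essSpec S₂ := by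
  ext l
  simp only [h₁.essSpec_eq, h₂.essSpec_eq, Set.mem_ofPred_eq, he.pointSpec_eq, hσ,
    he.finiteDimensional_ker_iff, he.injective_iff]

end IsomorphicEigenspaces

section KernelCondition

variable {T : H →L[ℂ] H}
  (hk : LinearMap.ker (T : H →ₗ[ℂ] H) =
    LinearMap.ker ((adjoint T : H →L[ℂ] H) : H →ₗ[ℂ] H))
include hk

lemma kerSubSmulOneIsomorphic_adjoint_comp_self :
    KerSubSmulOneIsomorphic (adjoint T ∘L T) (T ∘L adjoint T) := by
  intro l
  rcases eq_or_ne l 0 with rfl | hl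
  · exact ⟨.ofEq _ _ (by
      rw [zero_smul, sub_zero, sub_zero, ker_adjoint_comp_self, ker_self_comp_adjoint, hk])⟩
  · exact ⟨kerSubSmulOneCompEquiv T (adjoint T) hl⟩

lemma isUnit_adjoint_comp_self_iff :
    IsUnit (adjoint T ∘L T) ↔ IsUnit T := by
  refine ⟨fun h => ?_, fun h => h.star.mul h⟩
  obtain ⟨hinj, hsurj⟩ := isUnit_iff_bijective.mp h
  rw [coe_comp] at hinj hsurj
  have hT'_inj : Function.Injective (adjoint T) := by
    rw [← coe_coe, ← LinearMap.ker_eq_bot, ← hk, LinearMap.ker_eq_bot, coe_coe]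
    exact hinj.of_comp
  rw [← isUnit_star, star_eq_adjoint, isUnit_iff_bijective]
  exact ⟨hT'_inj, hsurj.of_comp⟩

lemma spectrum_adjoint_comp_self_eq :
    spectrum ℂ (adjoint T ∘L T) = spectrum ℂ (T ∘L adjoint T) := by
  ext l
  rcases eq_or_ne l 0 with rfl | hl
  · have hk' : LinearMap.ker (adjoint T : H →ₗ[ℂ] H) =
        LinearMap.ker ((adjoint (adjoint T) : H →L[ℂ] H) : H →ₗ[ℂ] H) := by
      rw [adjoint_adjoint, hk]
    rw [spectrum.zero_mem_iff, spectrum.zero_mem_iff, isUnit_adjoint_comp_self_iff hk,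
      ← isUnit_star, star_eq_adjoint, ← isUnit_adjoint_comp_self_iff hk', adjoint_adjoint]
  · simpa [hl, mul_def] using Set.ext_iff.mp (spectrum.nonzero_mul_comm (adjoint T) T) l

end KernelCondition

theorem stmt12 (T : H →L[ℂ] H) (hk : LinearMap.ker (T : H →ₗ[ℂ] H) = LinearMap.ker ((adjoint T : H →L[ℂ] H) : H →ₗ[ℂ] H)) :
    spectrum ℂ (adjoint T ∘L T) = spectrum ℂ (T ∘L adjoint T) ∧
      essSpec (adjoint T ∘L T) = essSpec (T ∘L adjoint T) ∧
        discSpec (adjoint T ∘L T) = discSpec (T ∘L adjoint T) := by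
  have hσ := spectrum_adjoint_comp_self_eq hk
  have he := kerSubSmulOneIsomorphic_adjoint_comp_self hk
  exact ⟨hσ, he.essSpec_eq (.star_mul_self T) (.mul_star_self T) hσ, he.discSpec_eq hσ⟩
end

section
/- Let T be a bounded operator on a complex Hilbert space H with N(T) = N(T*). Then T attains its minimum modulus if and only if T* attains its minimum modulus. -/
/-!
Let m = m(T). If ‖Tx‖ = m at a unit vector x, then x minimises the Rayleigh quotient of T*T on
the unit sphere, so T*Tx = m²x. If m = 0, then x ∈ N(T) = N(T*) and T* attains its minimum
modulus 0 at x. If m > 0, then T is bounded below with closed range, and R(T)^⊥ = N(T*) = N(T)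
= 0, so T is onto; for y = Tw this gives ‖y‖² = ⟨T*y, w⟩ ≤ ‖T*y‖‖y‖/m, i.e. m(T*) ≥ m. The unit
vector Tx/m is then mapped by T* to mx, so T* attains its minimum modulus m. Applying this to T*
gives the converse.
-/

open ContinuousLinearMap MeasureTheory

variable {E F : Type*} [NormedAddCommGroup E] [InnerProductSpace ℂ E] [CompleteSpace E]
  [NormedAddCommGroup F] [InnerProductSpace ℂ F] [CompleteSpace F]

variable {H : Type*} [NormedAddCommGroup H] [InnerProductSpace ℂ H] [CompleteSpace H]

section MinimumModulus

variable {V W : Type*} [NormedAddCommGroup V] [InnerProductSpace ℂ V]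
  [NormedAddCommGroup W] [InnerProductSpace ℂ W]

theorem minMod_nonneg (T : V →L[ℂ] W) : 0 ≤ minMod T :=
  Real.sInf_nonneg <| by rintro _ ⟨x, -, rfl⟩; positivity

theorem minMod_le {T : V →L[ℂ] W} {x : V} (hx : ‖x‖ = 1) : minMod T ≤ ‖T x‖ :=
  csInf_le ⟨0, by rintro _ ⟨z, -, rfl⟩; positivity⟩ ⟨x, hx, rfl⟩

theorem minMod_mul_norm_le (T : V →L[ℂ] W) (x : V) : minMod T * ‖x‖ ≤ ‖T x‖ := by
  rcases eq_or_ne x 0 with rfl | hx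
  · simp
  have hx' : ‖x‖ ≠ 0 := norm_ne_zero_iff.mpr hx
  have h := minMod_le (T := T) (x := (‖x‖⁻¹ : ℝ) • x) (by simp [norm_smul, hx'])
  rw [map_smul_of_tower, norm_smul, norm_inv, norm_norm] at h
  rwa [← le_inv_mul_iff₀' (norm_pos_iff.mpr hx)]

theorem le_minMod {T : V →L[ℂ] W} {x₀ : V} (hx₀ : ‖x₀‖ = 1) {c : ℝ}
    (h : ∀ x, c * ‖x‖ ≤ ‖T x‖) : c ≤ minMod T :=
  le_csInf ⟨_, x₀, hx₀, rfl⟩ <| by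
    rintro _ ⟨x, hx : ‖x‖ = 1, rfl⟩
    simpa [hx] using h x

theorem ker_eq_bot_of_minMod_pos {T : V →L[ℂ] W} (hm : 0 < minMod T) : T.ker = ⊥ := by
  rw [LinearMap.ker_eq_bot']
  intro x hx
  have h := minMod_mul_norm_le T x
  rw [show T x = 0 from hx, norm_zero, ← mul_zero (minMod T)] at h
  exact norm_le_zero_iff.mp (le_of_mul_le_mul_left h hm)

variable [CompleteSpace V] [CompleteSpace W]

theorem adjoint_apply_apply_of_minMod_eq {T : V →L[ℂ] W} {x : V} (hx : ‖x‖ = 1)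
    (hTx : ‖T x‖ = minMod T) : adjoint T (T x) = ((minMod T ^ 2 : ℝ) : ℂ) • x := by
  set A := adjoint T ∘L T
  have hA : IsSelfAdjoint A := by
    rw [isSelfAdjoint_iff', adjoint_comp, adjoint_adjoint]
  have hre : ∀ z, A.reApplyInnerSelf z = ‖T z‖ ^ 2 := fun z => by
    rw [reApplyInnerSelf_apply, comp_apply, adjoint_inner_left, inner_self_eq_norm_sq]
  have hmin : IsMinOn A.reApplyInnerSelf (Metric.sphere 0 ‖x‖) x := fun z hz => by
    rw [hx, mem_sphere_zero_iff_norm] at hz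
    change A.reApplyInnerSelf x ≤ A.reApplyInnerSelf z
    rw [hre, hre, hTx]
    gcongr
    exacts [minMod_nonneg T, minMod_le hz]
  have hquot : A.rayleighQuotient x = minMod T ^ 2 := by
    simp [rayleighQuotient, hre, hx, hTx]
  simpa [A, hquot] using hA.eq_smul_self_of_isLocalExtrOn (Or.inl hmin.localize)

theorem range_eq_top_of_bound_of_ker_adjoint_eq_bot {T : V →L[ℂ] W} {c : ℝ} (hc : 0 < c)
    (hT : ∀ x, c * ‖x‖ ≤ ‖T x‖) (hker : (adjoint T).ker = ⊥) :
    T.range = ⊤ := by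
  have hanti : AntilipschitzWith ⟨c⁻¹, by positivity⟩ T :=
    T.antilipschitz_of_bound fun x => by
      change ‖x‖ ≤ c⁻¹ * ‖T x‖
      rw [inv_mul_eq_div, le_div_iff₀' hc]
      exact hT x
  have := hanti.completeSpace_range_clm
  rw [← Submodule.orthogonal_eq_bot_iff, orthogonal_range, hker]

theorem mul_norm_le_adjoint_apply_of_surjective {T : V →L[ℂ] W} {c : ℝ} (hc : 0 ≤ c)
    (hT : ∀ x, c * ‖x‖ ≤ ‖T x‖) (hsurj : T.range = ⊤) (y : W) :
    c * ‖y‖ ≤ ‖adjoint T y‖ := by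
  obtain ⟨w, rfl⟩ : ∃ w, T w = y := LinearMap.range_eq_top.mp hsurj y
  have hsq : ‖T w‖ ^ 2 ≤ ‖adjoint T (T w)‖ * ‖w‖ := by
    rw [← inner_self_eq_norm_sq (𝕜 := ℂ), ← adjoint_inner_left]
    exact (RCLike.re_le_norm _).trans (norm_inner_le_norm _ _)
  rcases eq_or_ne (T w) 0 with h0 | h0
  · simp [h0]
  refine le_of_mul_le_mul_right ?_ (norm_pos_iff.mpr h0)
  calc c * ‖T w‖ * ‖T w‖ = c * ‖T w‖ ^ 2 := by ring
    _ ≤ c * (‖adjoint T (T w)‖ * ‖w‖) := by gcongr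
    _ = ‖adjoint T (T w)‖ * (c * ‖w‖) := by ring
    _ ≤ ‖adjoint T (T w)‖ * ‖T w‖ := by gcongr; exact hT w

theorem minMod_le_minMod_adjoint {T : V →L[ℂ] W} (hm : 0 < minMod T)
    (hker : (adjoint T).ker = ⊥) {y₀ : W} (hy₀ : ‖y₀‖ = 1) :
    minMod T ≤ minMod (adjoint T) :=
  have hbound := minMod_mul_norm_le T
  le_minMod hy₀ <| mul_norm_le_adjoint_apply_of_surjective hm.le hbound <|
    range_eq_top_of_bound_of_ker_adjoint_eq_bot hm hbound hker

theorem minAttain_adjoint_of_ker_eq {T : V →L[ℂ] V} (hk : T.ker = (adjoint T).ker)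
    (hT : MinAttain T) : MinAttain (adjoint T) := by
  obtain ⟨x, hx, hTx⟩ := hT
  rcases (minMod_nonneg T).eq_or_lt with hm0 | hm
  · have hx_ker : x ∈ T.ker := norm_eq_zero.mp (hTx.trans hm0.symm)
    have hTx0 : adjoint T x = 0 := by rwa [hk] at hx_ker
    refine ⟨x, hx, ?_⟩
    rw [hTx0, norm_zero]
    exact le_antisymm (minMod_nonneg _) (by simpa [hTx0] using minMod_le (T := adjoint T) hx)
  set y := (minMod T)⁻¹ • T x
  have hy : ‖y‖ = 1 := by
    rw [norm_smul, norm_inv, Real.norm_of_nonneg hm.le, hTx, inv_mul_cancel₀ hm.ne']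
  have hval : ‖adjoint T y‖ = minMod T := by
    rw [map_smul_of_tower, adjoint_apply_apply_of_minMod_eq hx hTx, norm_smul, norm_smul, hx,
      norm_inv, Real.norm_of_nonneg hm.le, Complex.norm_real, Real.norm_of_nonneg (by positivity)]
    field_simp
  have hm_le := minMod_le_minMod_adjoint hm (hk ▸ ker_eq_bot_of_minMod_pos hm) hy
  exact ⟨y, hy, hval.trans (le_antisymm hm_le (hval ▸ minMod_le hy))⟩

end MinimumModulus

theorem stmt14 (T : H →L[ℂ] H) (hk : LinearMap.ker (T : H →ₗ[ℂ] H) = LinearMap.ker ((adjoint T : H →L[ℂ] H) : H →ₗ[ℂ] H)) :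
    MinAttain T ↔ MinAttain (adjoint T) := by
  refine ⟨minAttain_adjoint_of_ker_eq hk, fun h => ?_⟩
  simpa using minAttain_adjoint_of_ker_eq (T := adjoint T) (by simpa using hk.symm) h
end

section
/- Let (X, Σ, μ) be a σ-finite measure space and f ∈ L^∞(X). Then the multiplication operator M_f on L²(X) attains its minimum modulus if and only if there exists a measurable set A with μ(A) > 0 such that |f(t)| = ess inf(f) for all t ∈ A. -/
open ContinuousLinearMap MeasureTheory

variable {E F : Type*} [NormedAddCommGroup E] [InnerProductSpace ℂ E] [CompleteSpace E]
  [NormedAddCommGroup F] [InnerProductSpace ℂ F] [CompleteSpace F]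

/-! With `m = ess inf |f|`, the bound `|f| ≥ m` a.e. gives `‖f g‖ ≥ m ‖g‖`, while for every
`a > m` the set `{|f| < a}` has positive measure, so by σ-finiteness it contains a piece of
finite positive measure whose normalised indicator `g` has `‖f g‖ ≤ a`; hence `m(M_f) = m`.
If a unit vector `g` attains `m`, then `m |g| ≤ |f g|` pointwise with equal `L²` norms forces
`|f| = m` a.e. on `{g ≠ 0}`, a set of positive measure. Conversely, the normalised indicator of
a finite-measure piece of `A` is a unit vector with `‖f g‖ ≤ m`. -/

open Filter
open scoped ENNReal

section MinimumModulus

variable {G H : Type*} [NormedAddCommGroup G] [InnerProductSpace ℂ G] [NormedAddCommGroup H]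
  [InnerProductSpace ℂ H] {T : G →L[ℂ] H}

theorem minMod_le_norm_apply {x : G} (hx : ‖x‖ = 1) : minMod T ≤ ‖T x‖ :=
  csInf_le ⟨0, by rintro _ ⟨y, -, rfl⟩; exact norm_nonneg _⟩ ⟨x, hx, rfl⟩

theorem le_minMod_s19 {r : ℝ} (hG : ∃ x : G, ‖x‖ = 1) (h : ∀ x : G, ‖x‖ = 1 → r ≤ ‖T x‖) :
    r ≤ minMod T := by
  obtain ⟨x, hx⟩ := hG
  exact le_csInf ⟨_, x, hx, rfl⟩ (by rintro _ ⟨y, hy, rfl⟩; exact h y hy)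

theorem exists_norm_eq_one_norm_apply_le {x : G} {r : ℝ} (hx : x ≠ 0)
    (h : ‖T x‖ ≤ r * ‖x‖) : ∃ y : G, ‖y‖ = 1 ∧ ‖T y‖ ≤ r := by
  have hx' : 0 < ‖x‖ := norm_pos_iff.2 hx
  refine ⟨(‖x‖⁻¹ : ℂ) • x, ?_, ?_⟩
  · rw [norm_smul, norm_inv, Complex.norm_real, Real.norm_of_nonneg hx'.le,
      inv_mul_cancel₀ hx'.ne']
  · rw [map_smul, norm_smul, norm_inv, Complex.norm_real, Real.norm_of_nonneg hx'.le,
      inv_mul_le_iff₀ hx', mul_comm]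
    exact h

end MinimumModulus

namespace MeasureTheory

variable {X : Type*} [MeasurableSpace X] {μ : Measure X}

theorem Lp.ae_norm_eq_of_ae_norm_le_of_norm_le {V : Type*} [NormedAddCommGroup V]
    {p : ℝ≥0∞} (hp0 : p ≠ 0) (hp : p ≠ ∞) {u v : Lp V p μ}
    (hle : ∀ᵐ x ∂μ, ‖u x‖ ≤ ‖v x‖) (hnorm : ‖v‖ ≤ ‖u‖) : ∀ᵐ x ∂μ, ‖u x‖ = ‖v x‖ := by
  have hp' : 0 < p.toReal := ENNReal.toReal_pos hp0 hp
  have hint : ∫⁻ x, ‖v x‖ₑ ^ p.toReal ∂μ ≤ ∫⁻ x, ‖u x‖ₑ ^ p.toReal ∂μ := by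
    have := (ENNReal.toReal_le_toReal (Lp.eLpNorm_ne_top v) (Lp.eLpNorm_ne_top u)).1 hnorm
    rwa [eLpNorm_eq_lintegral_rpow_enorm_toReal hp0 hp,
      eLpNorm_eq_lintegral_rpow_enorm_toReal hp0 hp,
      ENNReal.rpow_le_rpow_iff (one_div_pos.2 hp')] at this
  have heq := ae_eq_of_ae_le_of_lintegral_le
    (hle.mono fun x hx => ENNReal.rpow_le_rpow (enorm_le_iff_norm_le.2 hx) hp'.le)
    (lintegral_rpow_enorm_lt_top_of_eLpNorm_lt_top hp0 hp (Lp.eLpNorm_lt_top u)).ne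
    ((Lp.aestronglyMeasurable v).enorm.pow_const _) hint
  filter_upwards [heq] with x hx
  exact enorm_eq_iff_norm_eq.1 (ENNReal.rpow_left_injective hp'.ne' hx)

theorem exists_measurableSet_pos_forall_of_ae {s : Set X} {p : X → Prop} (hs : MeasurableSet s)
    (hμs : μ s ≠ 0) (h : ∀ᵐ x ∂μ, x ∈ s → p x) :
    ∃ A, MeasurableSet A ∧ 0 < μ A ∧ ∀ x ∈ A, p x := by
  set N := toMeasurable μ {x | ¬(x ∈ s → p x)}
  refine ⟨s \ N, hs.diff (measurableSet_toMeasurable _ _), ?_, fun x hx => ?_⟩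
  · rwa [measure_sdiff_null (by rwa [measure_toMeasurable]), pos_iff_ne_zero]
  · by_contra hpx
    exact hx.2 (subset_toMeasurable _ _ fun hp => hpx (hp hx.1))

theorem NullMeasurableSet.exists_measurableSet_subset_pos_lt_top [SigmaFinite μ] {s : Set X}
    (hs : NullMeasurableSet s μ) (hμs : μ s ≠ 0) :
    ∃ t ⊆ s, MeasurableSet t ∧ 0 < μ t ∧ μ t < ∞ := by
  obtain ⟨t₀, ht₀s, ht₀, hst₀⟩ := hs.exists_measurable_subset_ae_eq
  obtain ⟨t, ht, htt₀, htpos, htfin⟩ := Measure.exists_subset_measure_lt_top ht₀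
    (by rwa [measure_congr hst₀, pos_iff_ne_zero])
  exact ⟨t, htt₀.trans ht₀s, ht, htpos, htfin⟩

section EssInf

variable {V : Type*} [NormedAddCommGroup V] {f : X → V}

theorem ae_essInf_norm_le : ∀ᵐ x ∂μ, essInf (‖f ·‖) μ ≤ ‖f x‖ :=
  ae_essInf_le (isBoundedUnder_of_eventually_ge (Eventually.of_forall fun x => norm_nonneg (f x)))

theorem le_essInf_norm_of_ae_le (hf : MemLp f ∞ μ) (hμ : μ ≠ 0) {a : ℝ}
    (h : ∀ᵐ x ∂μ, a ≤ ‖f x‖) : a ≤ essInf (‖f ·‖) μ := by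
  have : NeBot (ae μ) := ae_neBot.2 hμ
  obtain ⟨C, hC⟩ :=
    eLpNormEssSup_lt_top_iff_isBoundedUnder.1 (eLpNorm_exponent_top (f := f) ▸ hf.2)
  have hbdd : IsBoundedUnder (· ≤ ·) (ae μ) (‖f ·‖) :=
    ⟨C, (show ∀ᵐ x ∂μ, ‖f x‖₊ ≤ C from hC).mono fun _ hx => NNReal.coe_le_coe.2 hx⟩
  exact le_essInf_of_ae_le a h hbdd.isCoboundedUnder_ge

theorem essInf_norm_nonneg (hf : MemLp f ∞ μ) (hμ : μ ≠ 0) : 0 ≤ essInf (‖f ·‖) μ :=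
  le_essInf_norm_of_ae_le hf hμ (Eventually.of_forall fun x => norm_nonneg (f x))

end EssInf

def IsMultiplicationOperator (f : X → ℂ) (Mf : Lp ℂ 2 μ →L[ℂ] Lp ℂ 2 μ) : Prop :=
  ∀ g : Lp ℂ 2 μ, ⇑(Mf g) =ᵐ[μ] fun x => f x * g x

namespace IsMultiplicationOperator

variable {f : X → ℂ} {Mf : Lp ℂ 2 μ →L[ℂ] Lp ℂ 2 μ}

theorem mul_norm_le_norm_apply (hMf : IsMultiplicationOperator f Mf) {r : ℝ} (hr : 0 ≤ r)
    (h : ∀ᵐ x ∂μ, r ≤ ‖f x‖) (g : Lp ℂ 2 μ) : r * ‖g‖ ≤ ‖Mf g‖ := by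
  have key : ‖(r : ℂ) • g‖ ≤ 1 * ‖Mf g‖ := Lp.norm_le_mul_norm_of_ae_le_mul (by
    filter_upwards [Lp.coeFn_smul (r : ℂ) g, hMf g, h] with x hrg hfg hx
    rw [hrg, hfg, one_mul, Pi.smul_apply, smul_eq_mul, norm_mul, norm_mul, Complex.norm_real,
      Real.norm_of_nonneg hr]
    exact mul_le_mul_of_nonneg_right hx (norm_nonneg _))
  rwa [one_mul, norm_smul, Complex.norm_real, Real.norm_of_nonneg hr] at key

theorem ae_norm_eq_of_norm_apply_le (hMf : IsMultiplicationOperator f Mf) {r : ℝ} (hr : 0 ≤ r)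
    (h : ∀ᵐ x ∂μ, r ≤ ‖f x‖) {g : Lp ℂ 2 μ} (hg : ‖Mf g‖ ≤ r * ‖g‖) :
    ∀ᵐ x ∂μ, g x ≠ 0 → ‖f x‖ = r := by
  have hrg : ∀ᵐ x ∂μ, ‖((r : ℂ) • g) x‖ = r * ‖g x‖ := by
    filter_upwards [Lp.coeFn_smul (r : ℂ) g] with x hx
    rw [hx, Pi.smul_apply, norm_smul, Complex.norm_real, Real.norm_of_nonneg hr]
  have heq := Lp.ae_norm_eq_of_ae_norm_le_of_norm_le two_ne_zero ENNReal.ofNat_ne_top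
    (u := (r : ℂ) • g) (v := Mf g)
    (by
      filter_upwards [hrg, hMf g, h] with x h1 h2 h3
      rw [h1, h2, norm_mul]
      exact mul_le_mul_of_nonneg_right h3 (norm_nonneg _))
    (by rwa [norm_smul, Complex.norm_real, Real.norm_of_nonneg hr])
  filter_upwards [heq, hrg, hMf g] with x h1 h2 h3 hgx
  rw [h2, h3, norm_mul] at h1
  exact (mul_right_cancel₀ (norm_ne_zero_iff.2 hgx) h1).symm

theorem exists_norm_eq_one_norm_apply_le [SigmaFinite μ] (hMf : IsMultiplicationOperator f Mf)
    {s : Set X} {r : ℝ} (hs : NullMeasurableSet s μ) (hμs : μ s ≠ 0)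
    (hfs : ∀ x ∈ s, ‖f x‖ ≤ r) : ∃ g : Lp ℂ 2 μ, ‖g‖ = 1 ∧ ‖Mf g‖ ≤ r := by
  obtain ⟨t, hts, ht, htpos, htfin⟩ := hs.exists_measurableSet_subset_pos_lt_top hμs
  set χ := indicatorConstLp 2 ht htfin.ne (1 : ℂ)
  refine _root_.exists_norm_eq_one_norm_apply_le (x := χ) ?_
    (Lp.norm_le_mul_norm_of_ae_le_mul ?_)
  · rw [← norm_pos_iff, norm_indicatorConstLp two_ne_zero ENNReal.ofNat_ne_top, norm_one,
      one_mul]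
    exact Real.rpow_pos_of_pos (ENNReal.toReal_pos htpos.ne' htfin.ne) _
  · filter_upwards [hMf χ, indicatorConstLp_coeFn (p := 2) (hs := ht) (hμs := htfin.ne)
      (c := (1 : ℂ))] with x h1 h2
    rw [h1, h2, norm_mul]
    by_cases hx : x ∈ t
    · simp [Set.indicator_of_mem hx, hfs x (hts hx)]
    · simp [Set.indicator_of_notMem hx]

theorem minMod_eq_essInf [SigmaFinite μ] (hMf : IsMultiplicationOperator f Mf)
    (hf : MemLp f ∞ μ) (hμ : μ ≠ 0) : minMod Mf = essInf (‖f ·‖) μ := by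
  have htest : ∀ a, essInf (‖f ·‖) μ < a → ∃ g : Lp ℂ 2 μ, ‖g‖ = 1 ∧ ‖Mf g‖ ≤ a := by
    intro a ha
    refine hMf.exists_norm_eq_one_norm_apply_le
      (nullMeasurableSet_lt hf.1.aemeasurable.norm aemeasurable_const) (fun h0 => ?_)
      fun x hx => le_of_lt hx
    exact ha.not_ge (le_essInf_norm_of_ae_le hf hμ (by rw [ae_iff]; simpa using h0))
  refine le_antisymm (le_of_forall_gt_imp_ge_of_dense fun a ha => ?_)
    (le_minMod_s19 ?_ fun g hg => ?_)
  · obtain ⟨g, hg1, hg⟩ := htest a ha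
    exact (minMod_le_norm_apply hg1).trans hg
  · obtain ⟨g, hg1, -⟩ := htest _ (lt_add_one _)
    exact ⟨g, hg1⟩
  · simpa [hg] using hMf.mul_norm_le_norm_apply (essInf_norm_nonneg hf hμ) ae_essInf_norm_le g

end IsMultiplicationOperator

end MeasureTheory

theorem stmt19 {X : Type*} [MeasurableSpace X] (μ : Measure X) [SigmaFinite μ]
    (f : X → ℂ) (hf : MemLp f ⊤ μ)
    (Mf : Lp ℂ 2 μ →L[ℂ] Lp ℂ 2 μ)
    (hMf : ∀ g : Lp ℂ 2 μ, ⇑(Mf g) =ᵐ[μ] fun x => f x * g x) :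
    MinAttain Mf ↔
      ∃ A : Set X, MeasurableSet A ∧ 0 < μ A ∧
        ∀ t ∈ A, ‖f t‖ = sSup {a : ℝ | μ {x | ‖f x‖ < a} = 0} := by
  rw [← essInf_eq_sSup]
  rcases eq_or_ne μ 0 with rfl | hμ
  · simp [MinAttain, Lp.norm_def]
  replace hMf : IsMultiplicationOperator f Mf := hMf
  have hm := hMf.minMod_eq_essInf hf hμ
  constructor
  · rintro ⟨g, hg1, hg⟩
    have hgf := hMf.ae_norm_eq_of_norm_apply_le (essInf_norm_nonneg hf hμ) ae_essInf_norm_le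
      (by rw [hg, hm, hg1, mul_one])
    have hg0 : μ {x | g x ≠ 0} ≠ 0 := fun h0 => by
      have : g = 0 := Lp.eq_zero_iff_ae_eq_zero.2 (ae_iff.2 (by simpa using h0))
      simp [this] at hg1
    exact exists_measurableSet_pos_forall_of_ae
      ((Lp.stronglyMeasurable g).measurable (measurableSet_singleton 0).compl) hg0 hgf
  · rintro ⟨A, hA, hApos, hfA⟩
    obtain ⟨g, hg1, hg⟩ := hMf.exists_norm_eq_one_norm_apply_le hA.nullMeasurableSet
      hApos.ne' fun x hx => (hfA x hx).le
    exact ⟨g, hg1, le_antisymm (hg.trans hm.ge) (minMod_le_norm_apply hg1)⟩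
end
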